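/- For A = {a,b,c} and the profile σ with k voters ranking a≻b≻c, k voters ranking a≻c≻b, and k voters ranking b≻c≻a, where k ≥ 2, the expected Kendall-Tau disagreement of veto across a random split satisfies E[KT(f_v(σ^(1)), f_v(σ^(2)))] ≥ 1.5; combined with the bound E[KT(f_p(σ^(1)), f_p(σ^(2)))] ≤ 1.3125, it follows that AbC({f_p, f_v}, σ) = {f_p}. -/

import Mathlib

open scoped Classical

noncomputable section

/-- A strict ranking of the alternatives `A` among `m` positions: each alternative is
assigned its (0-indexed) position. -/
abbrev Ranking (A : Type*) (m : ℕ) := A ≃ Fin m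

/-- A weak ranking: a complete and transitive binary relation (ties allowed).
`ge a b` means `a` is ranked weakly above `b`. -/
structure WeakRanking (A : Type*) where
  ge : A → A → Prop
  total : ∀ a b, ge a b ∨ ge b a
  trans : ∀ a b c, ge a b → ge b c → ge a c

namespace WeakRanking

variable {A : Type*}

/-- `a` is ranked strictly above `b`. -/
def strict (r : WeakRanking A) (a b : A) : Prop := r.ge a b ∧ ¬ r.ge b a

/-- `a` and `b` are tied. -/
def tied (r : WeakRanking A) (a b : A) : Prop := r.ge a b ∧ r.ge b a

/-- The reversed weak ranking. -/
def rev (r : WeakRanking A) : WeakRanking A where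
  ge a b := r.ge b a
  total a b := r.total b a
  trans _ _ _ h1 h2 := r.trans _ _ _ h2 h1

/-- The all-tied weak ranking. -/
def allTied (A : Type*) : WeakRanking A :=
  ⟨fun _ _ => True, fun _ _ => Or.inl trivial, fun _ _ _ _ _ => trivial⟩

end WeakRanking

variable {A : Type*} {m : ℕ}

/-- The weak ranking induced by a strict ranking (smaller position = ranked higher). -/
def Ranking.toWeak (r : Ranking A m) : WeakRanking A where
  ge a b := r a ≤ r b
  total a b := le_total _ _
  trans _ _ _ h1 h2 := le_trans h1 h2

/-- The position-reversal permutation. -/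
def finRevPerm (m : ℕ) : Equiv.Perm (Fin m) :=
  ⟨Fin.rev, Fin.rev, Fin.rev_rev, Fin.rev_rev⟩

/-- The reversed strict ranking. -/
def Ranking.revR (r : Ranking A m) : Ranking A m := r.trans (finRevPerm m)

/-- Kendall-Tau distance with ties between two weak rankings: the sum over unordered pairs
of distinct alternatives of `D + T/2`, realized as half the sum over ordered pairs. -/
def KT [Fintype A] (r1 r2 : WeakRanking A) : ℝ :=
  (∑ p ∈ Finset.univ.offDiag,
      ((if (r1.strict p.1 p.2 ∧ r2.strict p.2 p.1) ∨ (r1.strict p.2 p.1 ∧ r2.strict p.1 p.2)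
          then (1 : ℝ) else 0)
        + (if r1.tied p.1 p.2 ∨ r2.tied p.1 p.2 then (1 : ℝ) else 0) / 2)) / 2

/-- A profile: the list of the voters' strict rankings. -/
abbrev Profile (A : Type*) (m : ℕ) := List (Ranking A m)

/-- A social welfare function. -/
abbrev SWF (A : Type*) (m : ℕ) := Profile A m → WeakRanking A

/-- Reverse every voter's ranking. -/
def revProfile (σ : Profile A m) : Profile A m := σ.map Ranking.revR

/-- A monotone positional scoring vector `1 = s₁ ≥ s₂ ≥ … ≥ sₘ = 0`. -/
structure ScoreVec (m : ℕ) where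
  s : Fin m → ℝ
  anti : Antitone s
  first : ∀ h : 0 < m, s ⟨0, h⟩ = 1
  last : ∀ h : 0 < m, s ⟨m - 1, Nat.sub_lt h Nat.one_pos⟩ = 0

/-- Total score of alternative `a` in profile `σ`. -/
def totalScore (sv : ScoreVec m) (σ : Profile A m) (a : A) : ℝ :=
  (σ.map fun r => sv.s (r a)).sum

/-- The positional scoring rule associated to a scoring vector. -/
def posSWF (sv : ScoreVec m) : SWF A m := fun σ =>
  { ge := fun a b => totalScore sv σ b ≤ totalScore sv σ a
    total := fun _ _ => le_total _ _
    trans := fun _ _ _ h1 h2 => le_trans h2 h1 }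

/-- The plurality scoring vector `(1,0,…,0)`. -/
def pluralityVec (m : ℕ) (hm : 2 ≤ m) : ScoreVec m where
  s i := if i.val = 0 then 1 else 0
  anti := by
    intro i j hij
    have h' : i.val ≤ j.val := hij
    dsimp only
    by_cases hj : j.val = 0
    · have hi : i.val = 0 := by omega
      simp [hi, hj]
    · by_cases hi : i.val = 0 <;> simp [hi, hj]
  first h := by simp
  last h := by
    have h' : m - 1 ≠ 0 := by omega
    simp [h']

/-- The veto scoring vector `(1,…,1,0)`. -/
def vetoVec (m : ℕ) (hm : 2 ≤ m) : ScoreVec m where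
  s i := if i.val = m - 1 then 0 else 1
  anti := by
    intro i j hij
    have h' : i.val ≤ j.val := hij
    dsimp only
    by_cases hi : i.val = m - 1
    · have hj : j.val = m - 1 := by have := j.isLt; omega
      simp [hi, hj]
    · by_cases hj : j.val = m - 1 <;> simp [hi, hj]
  first h := by
    have h' : (0 : ℕ) ≠ m - 1 := by omega
    simp [h']
  last h := by simp

/-- The reverse scoring vector, `s'_j = 1 - s_{m+1-j}`. -/
def ScoreVec.revVec (sv : ScoreVec m) : ScoreVec m where
  s j := 1 - sv.s j.rev
  anti := by
    intro i j hij
    have h1 : j.rev ≤ i.rev := by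
      simp only [Fin.le_def, Fin.val_rev]
      have h' : i.val ≤ j.val := hij
      omega
    have h2 := sv.anti h1
    dsimp only
    linarith
  first h := by
    have h1 : (⟨0, h⟩ : Fin m).rev = ⟨m - 1, Nat.sub_lt h Nat.one_pos⟩ := by
      ext
      simp [Fin.val_rev]
    show 1 - sv.s (⟨0, h⟩ : Fin m).rev = 1
    rw [h1, sv.last h]
    ring
  last h := by
    have h1 : (⟨m - 1, Nat.sub_lt h Nat.one_pos⟩ : Fin m).rev = ⟨0, h⟩ := by
      ext
      simp only [Fin.val_rev]
      omega
    show 1 - sv.s (⟨m - 1, Nat.sub_lt h Nat.one_pos⟩ : Fin m).rev = 0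
    rw [h1, sv.first h]
    ring

/-- One side of the split of the profile `σ` given by assignment `β`. -/
def subProfile (σ : Profile A m) (β : Fin σ.length → Bool) (b : Bool) : Profile A m :=
  ((List.finRange σ.length).filter fun i => β i == b).map σ.get

/-- Apply an SWF, producing the all-tied ranking on an empty (sub)profile. -/
def applySplit (f : SWF A m) (σ : Profile A m) : WeakRanking A :=
  if σ = [] then WeakRanking.allTied A else f σ

/-- Expected Kendall-Tau disagreement of `f` between the two sides of a uniformly random
split of `σ` (each voter placed independently and uniformly on one of the two sides). -/
def expDisagree [Fintype A] (f : SWF A m) (σ : Profile A m) : ℝ :=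
  (∑ β : Fin σ.length → Bool,
      KT (applySplit f (subProfile σ β true)) (applySplit f (subProfile σ β false)))
    / 2 ^ σ.length

/-- Aggregation by Consistency over a set of SWFs: the rules minimizing expected
disagreement across a random split. -/
def AbC [Fintype A] (F : Set (SWF A m)) (σ : Profile A m) : Set (SWF A m) :=
  {f | f ∈ F ∧ ∀ g ∈ F, expDisagree f σ ≤ expDisagree g σ}

/-- Aggregation by Consistency over a set of positional scoring vectors. -/
def AbCVec [Fintype A] (F : Set (ScoreVec m)) (σ : Profile A m) : Set (ScoreVec m) :=
  {sv | sv ∈ F ∧ ∀ sv' ∈ F, expDisagree (posSWF sv) σ ≤ expDisagree (posSWF sv') σ}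

/-- All permutations of the positions that fix every position outside `S`. -/
def permsOn (S : Finset (Fin m)) : List (Equiv.Perm (Fin m)) :=
  (Finset.univ.filter fun π : Equiv.Perm (Fin m) => ∀ i ∉ S, π i = i).toList

/-- The `k`-shuffling of profile `σ` with respect to the set of positions `S`: each voter's
ranking is replaced by `k·m!` copies, split evenly among the `|S|!` permutations of `S`. -/
def shuffle (S : Finset (Fin m)) (k : ℕ) (σ : Profile A m) : Profile A m :=
  σ.flatMap fun r =>
    (permsOn S).flatMap fun π =>
      List.replicate (k * Nat.factorial m / Nat.factorial S.card) (r.trans π)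

/-- The positions `2,…,m` (0-indexed: `1,…,m-1`). -/
def tailPositions (m : ℕ) : Finset (Fin m) := Finset.univ.filter fun i => 1 ≤ i.val

/-- Number of voters ranking `a` first. -/
def topCount (σ : Profile A m) (a : A) : ℕ := σ.countP fun r => (r a).val == 0

/-- A weak ranking has no ties among distinct alternatives. -/
def NoTies (w : WeakRanking A) : Prop := ∀ a b : A, a ≠ b → ¬ w.tied a b

/-- Probability (over a uniformly random split of `σ`) that the outputs of `f` on the two
sides order `a` and `b` strictly oppositely. -/
def probD [Fintype A] (f : SWF A m) (σ : Profile A m) (a b : A) : ℝ :=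
  ((Finset.univ.filter fun β : Fin σ.length → Bool =>
      ((applySplit f (subProfile σ β true)).strict a b ∧
        (applySplit f (subProfile σ β false)).strict b a) ∨
      ((applySplit f (subProfile σ β true)).strict b a ∧
        (applySplit f (subProfile σ β false)).strict a b)).card : ℝ) / 2 ^ σ.length

/-- Probability (over a uniformly random split of `σ`) that `a` and `b` are tied in the
output of `f` on at least one side. -/
def probT [Fintype A] (f : SWF A m) (σ : Profile A m) (a b : A) : ℝ :=
  ((Finset.univ.filter fun β : Fin σ.length → Bool =>
      (applySplit f (subProfile σ β true)).tied a b ∨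
      (applySplit f (subProfile σ β false)).tied a b).card : ℝ) / 2 ^ σ.length

/-- A rule picking rule over sets of positional scoring vectors. -/
abbrev RPRVec (A : Type*) (m : ℕ) := Set (ScoreVec m) → Profile A m → Set (ScoreVec m)

/-- An RPR returns a nonempty subset of the candidate rules. -/
def IsRPR (Z : RPRVec A m) : Prop := ∀ F σ, Z F σ ⊆ F ∧ (Z F σ).Nonempty

/-- Anonymity of an RPR: invariance under permuting voters. -/
def AnonymousRPR (Z : RPRVec A m) : Prop :=
  ∀ (F : Set (ScoreVec m)) (σ σ' : Profile A m), σ.Perm σ' → Z F σ = Z F σ'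

/-- Reversal symmetry of an RPR. -/
def ReversalSymmetric (Z : RPRVec A m) : Prop :=
  ∀ F : Set (ScoreVec m), ScoreVec.revVec '' F = F →
    ∀ σ : Profile A m, ScoreVec.revVec '' (Z F σ) = Z F (revProfile σ)

/-- Plurality-shuffling consistency of an RPR. -/
def PSConsistent (hm : 2 ≤ m) (Z : RPRVec A m) : Prop :=
  ∀ F : Set (ScoreVec m), F.Finite → pluralityVec m hm ∈ F →
    ∀ σ : Profile A m, NoTies (posSWF (pluralityVec m hm) σ) →
      ∃ k : ℕ, 1 ≤ k ∧ ∀ k', k ≤ k' →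
        Z F (shuffle (tailPositions m) k' σ) = {pluralityVec m hm}

/-- Union consistency of an RPR. -/
def UnionConsistent (Z : RPRVec A m) : Prop :=
  ∀ (F : Set (ScoreVec m)) (σa σb : Profile A m), (Z F σa ∩ Z F σb).Nonempty →
    Z F (σa ++ σb) = Z F σa ∩ Z F σb

/-- The welfare-maximizing RPR with utility function `u`. -/
def welfareMax (u : Ranking A m → WeakRanking A → ℝ) : RPRVec A m := fun F σ =>
  {sv | sv ∈ F ∧ ∀ sv' ∈ F,
      (σ.map fun r => u r (posSWF sv' σ)).sum ≤ (σ.map fun r => u r (posSWF sv σ)).sum}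

/-- The SWF induced by a (vector-valued) RPR, where it is singleton-valued. -/
def inducedVec (Z : RPRVec A m) (F : Set (ScoreVec m)) : SWF A m := fun σ =>
  if h : ∃ sv, Z F σ = {sv} then posSWF h.choose σ else WeakRanking.allTied A

/-- The SWF induced by an (SWF-valued) RPR, where it is singleton-valued. -/
def inducedSWF (Z : Set (SWF A m) → Profile A m → Set (SWF A m)) (F : Set (SWF A m)) :
    SWF A m := fun σ =>
  if h : ∃ f, Z F σ = {f} then h.choose σ else WeakRanking.allTied A

/-- The SWF induced by AbC over scoring vectors. -/
def inducedAbCVec [Fintype A] (F : Set (ScoreVec m)) : SWF A m := fun σ =>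
  if h : ∃ sv, AbCVec F σ = {sv} then posSWF h.choose σ else WeakRanking.allTied A

/-- Anonymity of an SWF. -/
def AnonymousSWF (f : SWF A m) : Prop :=
  ∀ σ σ' : Profile A m, σ.Perm σ' → f σ = f σ'

/-- Relabeling of a weak ranking along a permutation of the alternatives. -/
def permuteWeak (π : Equiv.Perm A) (w : WeakRanking A) : WeakRanking A where
  ge a b := w.ge (π.symm a) (π.symm b)
  total a b := w.total _ _
  trans _ _ _ h1 h2 := w.trans _ _ _ h1 h2

/-- Neutrality of an SWF: permuting the alternatives permutes the output accordingly. -/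
def NeutralSWF (f : SWF A m) : Prop :=
  ∀ (π : Equiv.Perm A) (σ : Profile A m),
    f (σ.map fun r => π.symm.trans r) = permuteWeak π (f σ)

/-- `a` pairwise defeats `b` in profile `σ`. -/
def pairwiseDefeats (σ : Profile A m) (a b : A) : Prop :=
  (σ.countP fun r => decide (r b < r a)) < (σ.countP fun r => decide (r a < r b))

/-- A set `S` is dominant if every member pairwise defeats every non-member. -/
def DominantSet [Fintype A] (σ : Profile A m) (S : Finset A) : Prop :=
  ∀ a ∈ S, ∀ b ∉ S, pairwiseDefeats σ a b

/-- The Smith set: the smallest dominant set (the intersection of all dominant sets). -/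
def SmithSet [Fintype A] (σ : Profile A m) : Finset A :=
  Finset.univ.filter fun a => ∀ S : Finset A, DominantSet σ S → a ∈ S

/-- `a` is among the top-ranked alternatives of `w`. -/
def isTop (w : WeakRanking A) (a : A) : Prop := ∀ b, w.ge a b

def SmithCriterion [Fintype A] (f : SWF A m) : Prop :=
  ∀ (σ : Profile A m) (a : A), isTop (f σ) a → a ∈ SmithSet σ

def CondorcetConsistent [Fintype A] (f : SWF A m) : Prop :=
  ∀ (σ : Profile A m) (c : A), SmithSet σ = {c} →
    ∀ a, isTop (f σ) a → a ∈ SmithSet σ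

def MajorityWinnerCriterion [Fintype A] (f : SWF A m) : Prop :=
  ∀ (σ : Profile A m) (c : A), SmithSet σ = {c} → σ.length < 2 * topCount σ c →
    ∀ a, isTop (f σ) a → a ∈ SmithSet σ

def PairwiseMajorityConsistent (f : SWF A m) : Prop :=
  ∀ (σ : Profile A m) (r : WeakRanking A),
    (∀ a b, r.strict a b ↔ pairwiseDefeats σ a b) → f σ = r

def UnanimousSWF (f : SWF A m) : Prop :=
  ∀ (σ : Profile A m) (r : Ranking A m), σ ≠ [] → (∀ x ∈ σ, x = r) →
    f σ = Ranking.toWeak r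

/-- Rank of `a` in weak ranking `w`: one plus the number of alternatives strictly above. -/
def rankIn [Fintype A] (w : WeakRanking A) (a : A) : ℕ :=
  1 + (Finset.univ.filter fun b => w.strict b a).card

/-- `r'` is obtained from `r` by (weakly) raising `a`, everything else unchanged. -/
def RaisesWeak (a : A) (r r' : Ranking A m) : Prop :=
  r' a ≤ r a ∧ ∀ b c : A, b ≠ a → c ≠ a → (r b < r c ↔ r' b < r' c)

/-- Monotonicity of an SWF: raising an alternative never hurts its rank. -/
def MonotonicSWF [Fintype A] (f : SWF A m) : Prop :=
  ∀ (a : A) (σ σ' : Profile A m), List.Forall₂ (RaisesWeak a) σ σ' →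
    rankIn (f σ') a ≤ rankIn (f σ) a

/-- Total score of `a` for a list of (position ↦ alternative) ballots of length `ℓ`. -/
def ballotScore [Fintype A] {ℓ : ℕ} (sv : ScoreVec ℓ) (P : List (Fin ℓ → A)) (a : A) : ℝ :=
  (P.map fun b => ∑ i : Fin ℓ, if b i = a then sv.s i else 0).sum

/-- A scoring vector achieves perfect consistency on the given split `(P1, P2)`. -/
def PerfectConsistency [Fintype A] {ℓ : ℕ} (sv : ScoreVec ℓ)
    (P1 P2 : List (Fin ℓ → A)) : Prop :=
  ∀ a b : A, a ≠ b →
    0 < (ballotScore sv P1 a - ballotScore sv P1 b) *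
        (ballotScore sv P2 a - ballotScore sv P2 b)

/-- Complete a `k`-partial ballot to a full ballot on `m` positions by placing the missing
alternatives at the bottom, in a fixed order. -/
def completeBallot [Fintype A] [LinearOrder A] {k m : ℕ} (hk : 0 < k)
    (b : Fin k → A) : Fin m → A := fun j =>
  if h : j.val < k then b ⟨j.val, h⟩
  else ((Finset.univ \ Finset.univ.image b).sort (· ≤ ·)).getD (j.val - k) (b ⟨0, hk⟩)

/-- `k`-shuffling for (position ↦ alternative) ballots. -/
def shuffleBallots {m : ℕ} (S : Finset (Fin m)) (k : ℕ) (P : List (Fin m → A)) :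
    List (Fin m → A) :=
  P.flatMap fun f =>
    (permsOn S).flatMap fun π =>
      List.replicate (k * Nat.factorial m / Nat.factorial S.card) (f ∘ π.symm)


-- Concrete setup for STATEMENTS 13 and 14: alternatives `A = Fin 3` with `a = 0`,
-- `b = 1`, `c = 2`; rankings are given as (alternative ↦ position) bijections.

/-- a ≻ b ≻ c -/
def rABC : Ranking (Fin 3) 3 := Equiv.ofBijective ![0, 1, 2] (by decide)
/-- a ≻ c ≻ b -/
def rACB : Ranking (Fin 3) 3 := Equiv.ofBijective ![0, 2, 1] (by decide)
/-- b ≻ c ≻ a -/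
def rBCA : Ranking (Fin 3) 3 := Equiv.ofBijective ![2, 0, 1] (by decide)

/-- The profile with k voters a≻b≻c, k voters a≻c≻b, and k voters b≻c≻a. -/
def sigmaK (k : ℕ) : Profile (Fin 3) 3 :=
  List.replicate k rABC ++ List.replicate k rACB ++ List.replicate k rBCA

/-!
Because the scores of the two sides of a split add up to the scores in the whole profile, two
alternatives with equal total score are, on every split, either tied on some side or ordered
oppositely by the two sides; either way the pair costs at least `1/2`. Veto gives `a`, `b`, `c`
the same total `2k`, so every split costs veto at least `3/2`.

Plurality never ranks `c` (nobody's favourite) above another alternative, so the pair `{x, c}`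
only costs `1/2`, when `x` gets no first place on one side; if `n` voters put `x` first, this
happens with probability at most `2 · 2^(-n)`. With `n = 2k` for `a`, `n = k` for `b`, and a cost
of at most `1` for the pair `{a, b}`, plurality costs at most `1 + 2^(-2k) + 2^(-k) ≤ 1.3125`.
-/

open Finset

lemma ScoreVec.nonneg (sv : ScoreVec m) (i : Fin m) : 0 ≤ sv.s i := by
  have hm : 0 < m := i.pos
  simpa [sv.last hm] using sv.anti (show i ≤ ⟨m - 1, Nat.sub_lt hm Nat.one_pos⟩ from
    Fin.le_iff_val_le_val.2 (Nat.le_sub_one_of_lt i.isLt))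

lemma totalScore_eq_sum (sv : ScoreVec m) (σ : Profile A m) (a : A) :
    totalScore sv σ a = ∑ i : Fin σ.length, sv.s (σ.get i a) := by
  conv_lhs => rw [totalScore, ← List.map_get_finRange σ]
  rw [List.map_map, Fin.sum_univ_def]
  rfl

lemma totalScore_nonneg (sv : ScoreVec m) (σ : Profile A m) (a : A) :
    0 ≤ totalScore sv σ a := by
  rw [totalScore_eq_sum]
  exact sum_nonneg fun i _ => sv.nonneg _

lemma totalScore_subProfile (sv : ScoreVec m) (σ : Profile A m) (β : Fin σ.length → Bool)
    (t : Bool) (a : A) :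
    totalScore sv (subProfile σ β t) a = ∑ i, if β i = t then sv.s (σ.get i a) else 0 := by
  rw [totalScore, subProfile, List.map_map, Fin.sum_univ_def, List.sum_map_ite]
  simp only [List.map_const', List.sum_replicate, smul_zero, add_zero]
  congr

lemma totalScore_subProfile_add (sv : ScoreVec m) (σ : Profile A m) (β : Fin σ.length → Bool)
    (a : A) :
    totalScore sv (subProfile σ β true) a + totalScore sv (subProfile σ β false) a
      = totalScore sv σ a := by
  rw [totalScore_subProfile, totalScore_subProfile, totalScore_eq_sum, ← sum_add_distrib]
  exact sum_congr rfl fun i _ => by cases β i <;> simp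

lemma totalScore_subProfile_eq_zero (sv : ScoreVec m) (σ : Profile A m)
    (β : Fin σ.length → Bool) {c : A} (hc : totalScore sv σ c = 0) (t : Bool) :
    totalScore sv (subProfile σ β t) c = 0 := by
  have := totalScore_subProfile_add sv σ β c
  have := totalScore_nonneg sv (subProfile σ β true) c
  have := totalScore_nonneg sv (subProfile σ β false) c
  cases t <;> linarith

def supporters (sv : ScoreVec m) (σ : Profile A m) (a : A) : Finset (Fin σ.length) :=
  {i | sv.s (σ.get i a) ≠ 0}

lemma totalScore_subProfile_eq_zero_iff (sv : ScoreVec m) (σ : Profile A m)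
    (β : Fin σ.length → Bool) (t : Bool) (a : A) :
    totalScore sv (subProfile σ β t) a = 0 ↔ ∀ i ∈ supporters sv σ a, β i ≠ t := by
  rw [totalScore_subProfile, sum_eq_zero_iff_of_nonneg fun i _ => by
    split_ifs <;> simp [sv.nonneg]]
  simp only [supporters, mem_univ, mem_filter, true_and, ite_eq_right_iff]
  exact forall_congr' fun i => by tauto

lemma totalScore_pluralityVec (hm : 2 ≤ m) (σ : Profile A m) (a : A) :
    totalScore (pluralityVec m hm) σ a = #(supporters (pluralityVec m hm) σ a) := by
  rw [totalScore_eq_sum, supporters, natCast_card_filter]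
  exact sum_congr rfl fun i _ => by simp [pluralityVec]

lemma card_filter_forall_ne_mul_two_pow {ι : Type*} [Fintype ι] [DecidableEq ι]
    (S : Finset ι) (t : Bool) :
    #{β : ι → Bool | ∀ i ∈ S, β i ≠ t} * 2 ^ #S = 2 ^ Fintype.card ι := by
  have hpi : ({β : ι → Bool | ∀ i ∈ S, β i ≠ t} : Finset _)
      = Fintype.piFinset fun i => if i ∈ S then {!t} else univ := by
    ext β
    simp only [mem_filter, mem_univ, true_and, Fintype.mem_piFinset]
    refine forall_congr' fun i => ?_
    split_ifs with hi
    · cases β i <;> cases t <;> simp [hi]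
    · simp [hi]
  rw [hpi, Fintype.card_piFinset]
  simp only [apply_ite card, card_singleton, card_univ, Fintype.card_bool]
  rw [prod_ite, prod_const_one, one_mul, prod_const, ← pow_add, ← S.card_compl_add_card]
  congr 3
  ext; simp

lemma WeakRanking.tied_comm (r : WeakRanking A) (a b : A) : r.tied a b ↔ r.tied b a :=
  and_comm

lemma applySplit_posSWF_strict_iff (sv : ScoreVec m) (P : Profile A m) (a b : A) :
    (applySplit (posSWF sv) P).strict a b ↔ totalScore sv P b < totalScore sv P a := by
  rw [applySplit]
  split_ifs with h
  · subst h
    simp [WeakRanking.strict, WeakRanking.allTied, totalScore]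
  · exact lt_iff_le_not_ge.symm

lemma applySplit_posSWF_tied_iff (sv : ScoreVec m) (P : Profile A m) (a b : A) :
    (applySplit (posSWF sv) P).tied a b ↔ totalScore sv P a = totalScore sv P b := by
  rw [applySplit]
  split_ifs with h
  · subst h
    simp [WeakRanking.tied, WeakRanking.allTied, totalScore]
  · exact and_comm.trans le_antisymm_iff.symm

section Events

variable (f : SWF A m) (σ : Profile A m) (a b : A) (β : Fin σ.length → Bool)

def Opposed : Prop :=
  ((applySplit f (subProfile σ β true)).strict a b ∧
      (applySplit f (subProfile σ β false)).strict b a) ∨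
    ((applySplit f (subProfile σ β true)).strict b a ∧
      (applySplit f (subProfile σ β false)).strict a b)

def TiedOnASide : Prop :=
  (applySplit f (subProfile σ β true)).tied a b ∨ (applySplit f (subProfile σ β false)).tied a b

lemma opposed_comm : Opposed f σ a b β ↔ Opposed f σ b a β :=
  or_comm

lemma tiedOnASide_comm : TiedOnASide f σ a b β ↔ TiedOnASide f σ b a β := by
  simp only [TiedOnASide, WeakRanking.tied_comm _ a]

lemma not_opposed_and_tiedOnASide : ¬ (Opposed f σ a b β ∧ TiedOnASide f σ a b β) := by
  simp only [Opposed, TiedOnASide, WeakRanking.strict, WeakRanking.tied]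
  tauto

end Events

section Probabilities

variable [Fintype A] (f : SWF A m) (σ : Profile A m) (a b : A)

def pairDisagreement : ℝ := probD f σ a b + probT f σ a b / 2

lemma expDisagree_eq_sum_offDiag :
    expDisagree f σ = (∑ p ∈ univ.offDiag, pairDisagreement f σ p.1 p.2) / 2 := by
  simp only [expDisagree, KT, pairDisagreement, probD, probT, natCast_card_filter, ← sum_div]
  rw [sum_comm, div_right_comm, sum_div]
  congr 1
  refine sum_congr rfl fun p _ => ?_
  rw [sum_add_distrib, ← sum_div]
  ring

lemma probD_eq : probD f σ a b = #{β | Opposed f σ a b β} / 2 ^ σ.length := by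
  rw [probD]
  congr

lemma probT_eq : probT f σ a b = #{β | TiedOnASide f σ a b β} / 2 ^ σ.length := by
  rw [probT]
  congr

lemma pairDisagreement_comm : pairDisagreement f σ a b = pairDisagreement f σ b a := by
  simp only [pairDisagreement, probD_eq, probT_eq, opposed_comm f σ a b,
    tiedOnASide_comm f σ a b]

lemma pairDisagreement_le_one : pairDisagreement f σ a b ≤ 1 := by
  have hdisj : Disjoint (univ.filter (Opposed f σ a b)) (univ.filter (TiedOnASide f σ a b)) :=
    disjoint_filter.2 fun β _ hD hT => not_opposed_and_tiedOnASide f σ a b β ⟨hD, hT⟩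
  have hsum : probD f σ a b + probT f σ a b ≤ 1 := by
    rw [probD_eq, probT_eq, ← add_div, div_le_one (by positivity), ← Nat.cast_add,
      ← card_union_of_disjoint hdisj]
    exact_mod_cast (card_le_univ _).trans_eq (by simp)
  have : 0 ≤ probT f σ a b := by rw [probT]; positivity
  rw [pairDisagreement]
  linarith

lemma half_le_pairDisagreement_of_forall
    (h : ∀ β, Opposed f σ a b β ∨ TiedOnASide f σ a b β) :
    1 / 2 ≤ pairDisagreement f σ a b := by
  have hcover : univ.filter (Opposed f σ a b) ∪ univ.filter (TiedOnASide f σ a b) = univ :=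
    eq_univ_of_forall fun β => by simpa only [mem_union, mem_filter, mem_univ, true_and] using h β
  have hsum : 1 ≤ probD f σ a b + probT f σ a b := by
    rw [probD_eq, probT_eq, ← add_div, one_le_div (by positivity), ← Nat.cast_add]
    exact_mod_cast (by simp : 2 ^ σ.length = #(univ : Finset (Fin σ.length → Bool))).trans_le
      (hcover ▸ card_union_le _ _)
  have : 0 ≤ probD f σ a b := by rw [probD]; positivity
  rw [pairDisagreement]
  linarith

end Probabilities

section Scoring

variable (sv : ScoreVec m) (σ : Profile A m) (β : Fin σ.length → Bool)

lemma opposed_or_tiedOnASide_of_totalScore_eq {a b : A}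
    (h : totalScore sv σ a = totalScore sv σ b) :
    Opposed (posSWF sv) σ a b β ∨ TiedOnASide (posSWF sv) σ a b β := by
  simp only [Opposed, TiedOnASide, applySplit_posSWF_strict_iff, applySplit_posSWF_tied_iff]
  have ha := totalScore_subProfile_add sv σ β a
  have hb := totalScore_subProfile_add sv σ β b
  rcases lt_trichotomy (totalScore sv (subProfile σ β true) a)
    (totalScore sv (subProfile σ β true) b) with hlt | heq | hgt
  · exact Or.inl (Or.inr ⟨hlt, by linarith⟩)
  · exact Or.inr (Or.inl heq)
  · exact Or.inl (Or.inl ⟨hgt, by linarith⟩)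

lemma not_opposed_of_totalScore_eq_zero {c : A} (hc : totalScore sv σ c = 0) (a : A) :
    ¬ Opposed (posSWF sv) σ a c β := by
  simp only [Opposed, applySplit_posSWF_strict_iff, totalScore_subProfile_eq_zero sv σ β hc,
    not_or, not_and, not_lt]
  exact ⟨fun _ => totalScore_nonneg .., fun h => absurd h (totalScore_nonneg ..).not_gt⟩

lemma tiedOnASide_iff_of_totalScore_eq_zero {c : A} (hc : totalScore sv σ c = 0) (a : A) :
    TiedOnASide (posSWF sv) σ a c β ↔
      (∀ i ∈ supporters sv σ a, β i ≠ true) ∨ (∀ i ∈ supporters sv σ a, β i ≠ false) := by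
  simp only [TiedOnASide, applySplit_posSWF_tied_iff, totalScore_subProfile_eq_zero sv σ β hc,
    totalScore_subProfile_eq_zero_iff]

lemma pairDisagreement_le_of_totalScore_eq_zero [Fintype A] {c : A}
    (hc : totalScore sv σ c = 0) (a : A) :
    pairDisagreement (posSWF sv) σ a c ≤ 1 / 2 ^ #(supporters sv σ a) := by
  have hD : probD (posSWF sv) σ a c = 0 := by
    rw [probD_eq, filter_false_of_mem fun β _ => not_opposed_of_totalScore_eq_zero sv σ β hc a]
    simp
  have hT : #{β | TiedOnASide (posSWF sv) σ a c β} ≤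
      #{β : Fin σ.length → Bool | ∀ i ∈ supporters sv σ a, β i ≠ true} +
        #{β : Fin σ.length → Bool | ∀ i ∈ supporters sv σ a, β i ≠ false} := by
    refine (card_le_card fun β hβ => ?_).trans (card_union_le _ _)
    simpa only [mem_union, mem_filter, mem_univ, true_and,
      tiedOnASide_iff_of_totalScore_eq_zero sv σ β hc] using hβ
  have hcount (t : Bool) : (#{β : Fin σ.length → Bool | ∀ i ∈ supporters sv σ a, β i ≠ t} : ℝ)
      * 2 ^ #(supporters sv σ a) = 2 ^ σ.length := by
    exact_mod_cast (card_filter_forall_ne_mul_two_pow (supporters sv σ a) t).trans (by simp)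
  rw [pairDisagreement, hD, probT_eq, zero_add]
  calc (#{β | TiedOnASide (posSWF sv) σ a c β} : ℝ) / 2 ^ σ.length / 2
      ≤ (#{β : Fin σ.length → Bool | ∀ i ∈ supporters sv σ a, β i ≠ true} +
          #{β : Fin σ.length → Bool | ∀ i ∈ supporters sv σ a, β i ≠ false}) /
          2 ^ σ.length / 2 := by gcongr; exact_mod_cast hT
    _ = 1 / 2 ^ #(supporters sv σ a) := by
      field_simp
      linarith [hcount true, hcount false]

end Scoring

lemma sum_offDiag_fin_three_of_symm (g : Fin 3 → Fin 3 → ℝ) (hg : ∀ a b, g a b = g b a) :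
    ∑ p ∈ (univ : Finset (Fin 3)).offDiag, g p.1 p.2 = 2 * (g 0 1 + g 0 2 + g 1 2) := by
  rw [show (univ : Finset (Fin 3)).offDiag = {(0, 1), (1, 0), (0, 2), (2, 0), (1, 2), (2, 1)}
    from by decide]
  simp [hg 1 0, hg 2 0, hg 2 1]
  ring

lemma expDisagree_fin_three (f : SWF (Fin 3) m) (σ : Profile (Fin 3) m) :
    expDisagree f σ =
      pairDisagreement f σ 0 1 + pairDisagreement f σ 0 2 + pairDisagreement f σ 1 2 := by
  rw [expDisagree_eq_sum_offDiag, sum_offDiag_fin_three_of_symm _ (pairDisagreement_comm f σ)]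
  ring

lemma AbCVec_pair_eq_singleton_of_lt [Fintype A] {sv sv' : ScoreVec m} {σ : Profile A m}
    (h : expDisagree (posSWF sv) σ < expDisagree (posSWF sv') σ) :
    AbCVec {sv, sv'} σ = {sv} := by
  ext w
  simp only [AbCVec, Set.mem_ofPred_eq, Set.mem_insert_iff, Set.mem_singleton_iff,
    forall_eq_or_imp, forall_eq]
  constructor
  · rintro ⟨rfl | rfl, hw, -⟩
    · rfl
    · exact absurd hw h.not_ge
  · rintro rfl
    exact ⟨Or.inl rfl, le_rfl, h.le⟩

section SigmaK

variable (hm : 2 ≤ 3) (k : ℕ)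

lemma totalScore_vetoVec_sigmaK (x : Fin 3) :
    totalScore (vetoVec 3 hm) (sigmaK k) x = 2 * k := by
  fin_cases x <;>
    simp [totalScore, sigmaK, vetoVec, rABC, rACB, rBCA, List.sum_replicate, two_mul]

lemma totalScore_pluralityVec_sigmaK (x : Fin 3) :
    totalScore (pluralityVec 3 hm) (sigmaK k) x = ![2 * (k : ℝ), k, 0] x := by
  fin_cases x <;>
    simp [totalScore, sigmaK, pluralityVec, rABC, rACB, rBCA, List.sum_replicate, two_mul]

lemma card_supporters_pluralityVec_sigmaK :
    #(supporters (pluralityVec 3 hm) (sigmaK k) 0) = 2 * k ∧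
      #(supporters (pluralityVec 3 hm) (sigmaK k) 1) = k := by
  have h0 := totalScore_pluralityVec hm (sigmaK k) 0
  have h1 := totalScore_pluralityVec hm (sigmaK k) 1
  simp only [totalScore_pluralityVec_sigmaK, Matrix.cons_val_zero, Matrix.cons_val_one] at h0 h1
  exact ⟨by exact_mod_cast h0.symm, by exact_mod_cast h1.symm⟩

lemma three_halves_le_expDisagree_vetoVec_sigmaK :
    3 / 2 ≤ expDisagree (posSWF (vetoVec 3 hm)) (sigmaK k) := by
  have hpair (a b : Fin 3) : 1 / 2 ≤ pairDisagreement (posSWF (vetoVec 3 hm)) (sigmaK k) a b :=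
    half_le_pairDisagreement_of_forall _ _ a b fun β =>
      opposed_or_tiedOnASide_of_totalScore_eq _ _ β
        ((totalScore_vetoVec_sigmaK hm k a).trans (totalScore_vetoVec_sigmaK hm k b).symm)
  rw [expDisagree_fin_three]
  linarith [hpair 0 1, hpair 0 2, hpair 1 2]

lemma expDisagree_pluralityVec_sigmaK_le :
    expDisagree (posSWF (pluralityVec 3 hm)) (sigmaK k) ≤ 1 + 1 / 2 ^ (2 * k) + 1 / 2 ^ k := by
  have hc : totalScore (pluralityVec 3 hm) (sigmaK k) 2 = 0 := by
    simp [totalScore_pluralityVec_sigmaK]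
  obtain ⟨ha, hb⟩ := card_supporters_pluralityVec_sigmaK hm k
  have hab := pairDisagreement_le_one (posSWF (pluralityVec 3 hm)) (sigmaK k) 0 1
  have hac := pairDisagreement_le_of_totalScore_eq_zero _ _ hc 0
  have hbc := pairDisagreement_le_of_totalScore_eq_zero _ _ hc 1
  rw [ha] at hac
  rw [hb] at hbc
  rw [expDisagree_fin_three]
  linarith

end SigmaK

/-- on the example profile (k ≥ 2), the expected Kendall-Tau disagreement of
veto across a random split is at least 1.5; combined with the bound 1.3125 for plurality,
it follows that `AbC({f_p, f_v}, σ) = {f_p}`. -/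
theorem veto_disagreement_bound_and_AbC (k : ℕ) (hk : 2 ≤ k) :
    (3 / 2 : ℝ) ≤ expDisagree (posSWF (vetoVec 3 (by norm_num))) (sigmaK k) ∧
    expDisagree (posSWF (pluralityVec 3 (by norm_num))) (sigmaK k) ≤ 1.3125 ∧
    AbCVec {pluralityVec 3 (by norm_num), vetoVec 3 (by norm_num)} (sigmaK k)
      = {pluralityVec 3 (by norm_num)} := by
  have hveto := three_halves_le_expDisagree_vetoVec_sigmaK (by norm_num) k
  have hplur : expDisagree (posSWF (pluralityVec 3 (by norm_num))) (sigmaK k) ≤ 1.3125 := by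
    have h2k : (1 : ℝ) / 2 ^ (2 * k) ≤ 1 / 2 ^ 4 := by gcongr; norm_num; omega
    have hk' : (1 : ℝ) / 2 ^ k ≤ 1 / 2 ^ 2 := by gcongr; norm_num
    linarith [expDisagree_pluralityVec_sigmaK_le (by norm_num) k]
  exact ⟨hveto, hplur, AbCVec_pair_eq_singleton_of_lt (by linarith)⟩

end
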